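/- Let η ∈ E satisfy the Galerkin orthogonality a_h(η, v_h) + ik⟨η, v_h⟩_Γ = 0 for all v_h ∈ V_h, where a_h(v,w) = (∇v,∇w) + iγΣ_e h_e⟨[∂v/∂n_e],[∂w/∂n_e]⟩_e. Then for any w_h ∈ V_h (writing η = (u − w_h) + (w_h − \tilde u_h) etc.), one has ‖η‖_{1,h}² + k‖η‖_{L²(Γ)}² ≤ C(‖u − w_h‖_{1,h}² + k‖u − w_h‖_{L²(Γ)}²), where u − w_h is the difference between the exact function and any element of V_h and η = u − \tilde u_h with \tilde u_h the elliptic projection. -/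

import Mathlib

/-!
Write `b(v, w) = a_h(v, w) + ik⟨v, w⟩_Γ` and `ζ = u − w_h`. Testing the Galerkin orthogonality
with `η − ζ = w_h − ũ_h ∈ V_h` gives `b(η, η) = b(η, ζ)`. The functional `Re + Im` sends
`b(η, η)` to `‖η‖²_{1,h} + k‖η‖²_Γ`. Every term of `b(η, ζ)` is an inner product of the
corresponding components of `η` and `ζ` times a coefficient `c` with `Re c, Im c ≥ 0`, and on it
`Re + Im` is at most `(Re c + Im c)` times the component of `‖ζ‖² + ‖η‖²/2`, by
`|Re z| + |Im z| ≤ √2|z|`, Cauchy–Schwarz and Young. So the energy of `η` is at most that of `ζ`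
plus half its own, and `C = 2` works.
-/

open Complex Finset

def reAddIm : ℂ →ₗ[ℝ] ℝ := reLm + imLm

@[simp]
theorem reAddIm_apply (z : ℂ) : reAddIm z = z.re + z.im := rfl

section InnerBounds

variable {H : Type*} [NormedAddCommGroup H] [InnerProductSpace ℂ H]

theorem abs_re_add_abs_im_inner_le (x y : H) :
    |(inner ℂ x y : ℂ).re| + |(inner ℂ x y : ℂ).im| ≤ ‖x‖ ^ 2 + ‖y‖ ^ 2 / 2 := by
  set w : ℂ := inner ℂ x y
  have hw : ‖w‖ ≤ ‖x‖ * ‖y‖ := norm_inner_le_norm x y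
  have hnorm : w.re ^ 2 + w.im ^ 2 = ‖w‖ ^ 2 := by
    rw [Complex.sq_norm, Complex.normSq_apply]; ring
  -- `|Re w| + |Im w| ≤ √2 ‖w‖` and `√2 ‖x‖ ‖y‖ ≤ ‖x‖² + ‖y‖²/2`, compared after squaring
  have hsq : (|w.re| + |w.im|) ^ 2 ≤ (‖x‖ ^ 2 + ‖y‖ ^ 2 / 2) ^ 2 := by
    nlinarith [sq_nonneg (|w.re| - |w.im|), sq_nonneg (‖x‖ ^ 2 - ‖y‖ ^ 2 / 2), sq_abs w.re,
      sq_abs w.im, mul_self_le_mul_self (norm_nonneg w) hw]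
  exact (pow_le_pow_iff_left₀ (by positivity) (by positivity) two_ne_zero).mp hsq

theorem reAddIm_mul_inner_le {c : ℂ} (hre : 0 ≤ c.re) (him : 0 ≤ c.im) (x y : H) :
    reAddIm (c * inner ℂ x y) ≤ (c.re + c.im) * (‖x‖ ^ 2 + ‖y‖ ^ 2 / 2) := by
  set z : ℂ := inner ℂ x y
  have hsplit : reAddIm (c * z) = c.re * (z.re + z.im) + c.im * (z.re - z.im) := by
    simp only [reAddIm_apply, mul_re, mul_im]; ring
  have hz : |z.re| + |z.im| ≤ ‖x‖ ^ 2 + ‖y‖ ^ 2 / 2 := abs_re_add_abs_im_inner_le x y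
  rw [hsplit]
  nlinarith [le_abs_self z.re, le_abs_self z.im, neg_abs_le z.im]

theorem reAddIm_mul_inner_self (c : ℂ) (y : H) :
    reAddIm (c * inner ℂ y y) = (c.re + c.im) * ‖y‖ ^ 2 := by
  rw [inner_self_eq_norm_sq_to_K, ← RCLike.ofReal_pow, RCLike.ofReal_eq_complex_ofReal,
    reAddIm_apply, re_mul_ofReal, im_mul_ofReal]
  ring

end InnerBounds

noncomputable section ProjectionForm

variable {E H Hj HΓ ι : Type*} [AddCommGroup E] [Module ℂ E]
  [NormedAddCommGroup H] [InnerProductSpace ℂ H] [NormedAddCommGroup Hj] [InnerProductSpace ℂ Hj]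
  [NormedAddCommGroup HΓ] [InnerProductSpace ℂ HΓ]
  (grad : E →ₗ[ℂ] H) (jump : ι → E →ₗ[ℂ] Hj) (tr : E →ₗ[ℂ] HΓ) (Eh : Finset ι) (he : ι → ℝ)
  (γ k : ℝ)

/-- The paper's `a_h(w, v) + ik⟨w, v⟩_Γ`: Mathlib's inner product is conjugate-linear in its
first argument, so the arguments appear swapped. -/
def projectionForm (v w : E) : ℂ :=
  inner ℂ (grad v) (grad w) + I * γ * ∑ e ∈ Eh, (he e : ℂ) * inner ℂ (jump e v) (jump e w)
    + I * k * inner ℂ (tr v) (tr w)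

/-- `‖v‖²_{1,h} + k‖v‖²_{L²(Γ)}`. -/
def energyNormSq (v : E) : ℝ :=
  ‖grad v‖ ^ 2 + γ * ∑ e ∈ Eh, he e * ‖jump e v‖ ^ 2 + k * ‖tr v‖ ^ 2

variable {grad jump tr Eh he γ k}

theorem projectionForm_sub_left (v v' w : E) :
    projectionForm grad jump tr Eh he γ k (v - v') w =
      projectionForm grad jump tr Eh he γ k v w - projectionForm grad jump tr Eh he γ k v' w := by
  simp only [projectionForm, map_sub, inner_sub_left, mul_sub, sum_sub_distrib]
  ring

theorem reAddIm_projectionForm (v w : E) :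
    reAddIm (projectionForm grad jump tr Eh he γ k v w) =
      reAddIm (1 * inner ℂ (grad v) (grad w))
        + ∑ e ∈ Eh, reAddIm ((I * (γ * he e)) * inner ℂ (jump e v) (jump e w))
        + reAddIm ((I * k) * inner ℂ (tr v) (tr w)) := by
  simp only [projectionForm, one_mul, mul_sum, mul_assoc, map_add, map_sum]

theorem reAddIm_projectionForm_self (v : E) :
    reAddIm (projectionForm grad jump tr Eh he γ k v v) =
      energyNormSq grad jump tr Eh he γ k v := by
  simp only [reAddIm_projectionForm, reAddIm_mul_inner_self, energyNormSq, mul_sum]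
  simp [mul_assoc]

theorem reAddIm_projectionForm_le (hγ : 0 ≤ γ) (hk : 0 ≤ k) (hhe : ∀ e ∈ Eh, 0 ≤ he e)
    (v w : E) :
    reAddIm (projectionForm grad jump tr Eh he γ k v w)
      ≤ energyNormSq grad jump tr Eh he γ k v + energyNormSq grad jump tr Eh he γ k w / 2 := by
  have hgrad : reAddIm (1 * inner ℂ (grad v) (grad w)) ≤ ‖grad v‖ ^ 2 + ‖grad w‖ ^ 2 / 2 := by
    simpa using reAddIm_mul_inner_le (c := 1) (by simp) (by simp) (grad v) (grad w)
  have hjump : ∀ e ∈ Eh, reAddIm ((I * (γ * he e)) * inner ℂ (jump e v) (jump e w))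
      ≤ γ * (he e * ‖jump e v‖ ^ 2) + γ * (he e * ‖jump e w‖ ^ 2) / 2 := fun e he_mem => by
    have := reAddIm_mul_inner_le (c := I * (γ * he e)) (by simp)
      (by simpa using mul_nonneg hγ (hhe e he_mem)) (jump e v) (jump e w)
    simp only [mul_re, mul_im, I_re, I_im, ofReal_re, ofReal_im] at this
    linarith
  have htr : reAddIm ((I * k) * inner ℂ (tr v) (tr w)) ≤ k * ‖tr v‖ ^ 2 + k * ‖tr w‖ ^ 2 / 2 := by
    have := reAddIm_mul_inner_le (c := I * k) (by simp) (by simpa using hk) (tr v) (tr w)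
    simp only [mul_re, mul_im, I_re, I_im, ofReal_re, ofReal_im] at this
    linarith
  rw [reAddIm_projectionForm]
  grw [hgrad, sum_le_sum hjump, htr]
  simp only [energyNormSq, sum_add_distrib, ← sum_div, ← mul_sum]
  linarith

end ProjectionForm

/-- Quasi-optimality of the elliptic projection. There is an
absolute constant `C > 0` such that: whenever `η = u − ũ_h` (with `ũ_h ∈ V_h`
the elliptic projection) satisfies the Galerkin orthogonality
`a_h(η, v_h) + ik⟨η, v_h⟩_Γ = 0` for all `v_h ∈ V_h`, where
`a_h(v,w) = (∇v,∇w) + iγ Σ_e h_e ⟨[∂v/∂n_e],[∂w/∂n_e]⟩_e`, then for any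
`w_h ∈ V_h`, `‖η‖_{1,h}² + k‖η‖²_{L²(Γ)} ≤ C(‖u−w_h‖_{1,h}² + k‖u−w_h‖²_{L²(Γ)})`.
The gradient, jumps and boundary trace are modeled by linear maps `grad`,
`jump e`, `tr` into complex Hilbert spaces, and
`‖v‖_{1,h}² = ‖grad v‖² + γ Σ_e h_e ‖jump e v‖²`. -/
theorem stmt7 :
    ∃ C : ℝ, 0 < C ∧
      ∀ (E H Hj HΓ : Type)
        [AddCommGroup E] [Module ℂ E]
        [NormedAddCommGroup H] [InnerProductSpace ℂ H]
        [NormedAddCommGroup Hj] [InnerProductSpace ℂ Hj]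
        [NormedAddCommGroup HΓ] [InnerProductSpace ℂ HΓ]
        (ι : Type) (Eh : Finset ι) (he : ι → ℝ) (γ k : ℝ)
        (grad : E →ₗ[ℂ] H) (jump : ι → E →ₗ[ℂ] Hj) (tr : E →ₗ[ℂ] HΓ)
        (Vh : Submodule ℂ E) (u utilde wh : E),
        0 < γ → 0 < k → (∀ e ∈ Eh, 0 < he e) →
        utilde ∈ Vh → wh ∈ Vh →
        -- Galerkin orthogonality: a_h(η, v_h) + ik⟨η, v_h⟩_Γ = 0 for all v_h ∈ V_h,
        -- with η = u − utilde
        (∀ vh ∈ Vh,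
          (inner ℂ (grad vh) (grad (u - utilde)) : ℂ)
            + Complex.I * (γ : ℂ) *
              ∑ e ∈ Eh, (he e : ℂ) * (inner ℂ (jump e vh) (jump e (u - utilde)) : ℂ)
            + Complex.I * (k : ℂ) * (inner ℂ (tr vh) (tr (u - utilde)) : ℂ) = 0) →
        ‖grad (u - utilde)‖ ^ 2
            + γ * ∑ e ∈ Eh, he e * ‖jump e (u - utilde)‖ ^ 2
            + k * ‖tr (u - utilde)‖ ^ 2
          ≤ C * (‖grad (u - wh)‖ ^ 2
            + γ * ∑ e ∈ Eh, he e * ‖jump e (u - wh)‖ ^ 2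
            + k * ‖tr (u - wh)‖ ^ 2) := by
  refine ⟨2, two_pos, ?_⟩
  intro E H Hj HΓ _ _ _ _ _ _ _ _ ι Eh he γ k grad jump tr Vh u utilde wh hγ hk hhe hU hW hG
  set N := energyNormSq grad jump tr Eh he γ k
  set B := projectionForm grad jump tr Eh he γ k
  have hmem : (u - utilde) - (u - wh) ∈ Vh := by
    rw [sub_sub_sub_cancel_left]
    exact Vh.sub_mem hW hU
  have horth : B (u - utilde) (u - utilde) = B (u - wh) (u - utilde) := by
    rw [← sub_eq_zero, ← projectionForm_sub_left]
    exact hG _ hmem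
  have hη : N (u - utilde) ≤ N (u - wh) + N (u - utilde) / 2 :=
    calc N (u - utilde) = reAddIm (B (u - utilde) (u - utilde)) :=
          (reAddIm_projectionForm_self _).symm
      _ = reAddIm (B (u - wh) (u - utilde)) := by rw [horth]
      _ ≤ N (u - wh) + N (u - utilde) / 2 :=
          reAddIm_projectionForm_le hγ.le hk.le (fun e he_mem => (hhe e he_mem).le) _ _
  show N (u - utilde) ≤ 2 * N (u - wh)
  linarith
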